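/- For γ ∈ (0,1) and integer x ≥ 2, if the probabilities at the endpoints 0 and x of a symmetric distribution on {0,…,x} are increased by ε > 0 while the probabilities at x/2 − z and x/2 + z (for an integer distance 0 ≤ z ≤ x/2 − 1 from the center) are each decreased by ε, then θ'(x,p) changes by at least ε[1/2 − (1+γ)/2 · (1/2)^{x−1}(1−γ)^{x−2}] ≥ 0, where θ'(x,p) := Σ_{y=0}^x p(y)(1/2)^y(1−γ)^{max(y−1,0)}. -/

import Mathlib

/-!
With `c = (1 - γ) / 2`, the weight `(1/2)^t (1-γ)^(t-1)` of position `t` in `θ'` is `c^t / (1 - γ)`.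
Since `0 < c ≤ 1`, moving two exponents `a, b ≥ 1` apart to `1` and `a + b - 1` can only increase
`c^a + c^b`, because `c + c^(a+b-1) - c^a - c^b = (c - c^b) (1 - c^(a-1)) ≥ 0`. Hence the two
weights at `x/2 ± z` sum to at most the weights `1/2` at `1` and `q = (1/2)^(x-1) (1-γ)^(x-2)` at
`x - 1`, and the weight at `x` is `q (1-γ)/2`; the remaining bounds use `q ≤ 1/2`.
-/

open Real

theorem rpow_add_rpow_le_self_add_rpow {c a b : ℝ} (hc0 : 0 < c) (hc1 : c ≤ 1)
    (ha : 1 ≤ a) (hb : 1 ≤ b) : c ^ a + c ^ b ≤ c + c ^ (a + b - 1) := by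
  have hca : c ^ a = c * c ^ (a - 1) := by
    rw [← rpow_one_add' hc0.le (by linarith)]; ring_nf
  have hcab : c ^ (a + b - 1) = c ^ b * c ^ (a - 1) := by
    rw [← rpow_add hc0]; ring_nf
  have hb' : c ^ b ≤ c := by
    simpa using rpow_le_rpow_of_exponent_ge hc0 hc1 hb
  have ha' : c ^ (a - 1) ≤ 1 := rpow_le_one hc0.le hc1 (by linarith)
  rw [hca, hcab]
  nlinarith [mul_nonneg (sub_nonneg.2 hb') (sub_nonneg.2 ha')]

noncomputable def thetaWeight (γ t : ℝ) : ℝ := (1 / 2 : ℝ) ^ t * (1 - γ) ^ (t - 1)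

theorem thetaWeight_eq_div {γ : ℝ} (hγ : γ < 1) (t : ℝ) :
    thetaWeight γ t = ((1 - γ) / 2) ^ t / (1 - γ) := by
  have hγ' : 0 < 1 - γ := by linarith
  rw [thetaWeight, rpow_sub_one hγ'.ne', div_rpow hγ'.le zero_le_two, one_div,
    inv_rpow zero_le_two]
  field_simp

theorem thetaWeight_one (γ : ℝ) : thetaWeight γ 1 = 1 / 2 := by
  simp [thetaWeight]

theorem thetaWeight_natCast_add_one (γ : ℝ) (n : ℕ) :
    thetaWeight γ (n + 1) = (1 / 2 : ℝ) ^ (n + 1) * (1 - γ) ^ n := by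
  rw [thetaWeight, add_sub_cancel_right, ← rpow_natCast, ← rpow_natCast]
  push_cast
  rfl

theorem thetaWeight_add_le {γ a b : ℝ} (hγ0 : -1 ≤ γ) (hγ1 : γ < 1) (ha : 1 ≤ a) (hb : 1 ≤ b) :
    thetaWeight γ a + thetaWeight γ b ≤ thetaWeight γ 1 + thetaWeight γ (a + b - 1) := by
  have hc := rpow_add_rpow_le_self_add_rpow (c := (1 - γ) / 2) (by linarith) (by linarith) ha hb
  simp only [thetaWeight_eq_div hγ1, rpow_one, ← add_div]
  exact div_le_div_of_nonneg_right hc (by linarith)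

theorem half_pow_succ_mul_pow_le_half {γ : ℝ} (hγ0 : 0 ≤ γ) (hγ1 : γ ≤ 1) (n : ℕ) :
    (1 / 2 : ℝ) ^ (n + 1) * (1 - γ) ^ n ≤ 1 / 2 := by
  have h2 : (1 / 2 : ℝ) ^ (n + 1) ≤ 1 / 2 :=
    pow_le_of_le_one (by norm_num) (by norm_num) n.succ_ne_zero
  have hγ : (1 - γ) ^ n ≤ 1 := pow_le_one₀ (by linarith) (by linarith)
  nlinarith [pow_nonneg (sub_nonneg.2 hγ1) n]

theorem stmt_5 (γ : ℝ) (hγ0 : 0 < γ) (hγ1 : γ < 1) (x : ℕ) (hx : 2 ≤ x)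
    (ε : ℝ) (hε : 0 < ε) (z : ℝ) (hz0 : 0 ≤ z) (hz1 : z ≤ (x : ℝ) / 2 - 1) :
    ε * (1 + (1 / 2 : ℝ) ^ x * (1 - γ) ^ (x - 1)
        - (1 / 2 : ℝ) ^ ((x : ℝ) / 2 - z) * (1 - γ) ^ ((x : ℝ) / 2 - z - 1)
        - (1 / 2 : ℝ) ^ ((x : ℝ) / 2 + z) * (1 - γ) ^ ((x : ℝ) / 2 + z - 1))
      ≥ ε * (1 / 2 - (1 + γ) / 2 * (1 / 2 : ℝ) ^ (x - 1) * (1 - γ) ^ (x - 2))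
    ∧ ε * (1 / 2 - (1 + γ) / 2 * (1 / 2 : ℝ) ^ (x - 1) * (1 - γ) ^ (x - 2))
      ≥ ε * (1 / 2 - (1 + γ) / 4)
    ∧ ε * (1 / 2 - (1 + γ) / 4) ≥ 0 := by
  obtain ⟨n, rfl⟩ := Nat.exists_eq_add_of_le' hx
  rw [show n + 2 - 1 = n + 1 by omega, Nat.add_sub_cancel]
  set q := (1 / 2 : ℝ) ^ (n + 1) * (1 - γ) ^ n
  have hsum := thetaWeight_add_le (a := (↑(n + 2) : ℝ) / 2 - z) (b := (↑(n + 2) : ℝ) / 2 + z)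
    (by linarith) hγ1 (by linarith) (by push_cast at hz1 ⊢; linarith)
  rw [thetaWeight_one, show (↑(n + 2) : ℝ) / 2 - z + (↑(n + 2) / 2 + z) - 1 = n + 1 by
    push_cast; ring, thetaWeight_natCast_add_one] at hsum
  unfold thetaWeight at hsum
  have hlast : (1 / 2 : ℝ) ^ (n + 2) * (1 - γ) ^ (n + 1) = q * ((1 - γ) / 2) := by
    simp only [q]; ring
  have hq : q ≤ 1 / 2 := half_pow_succ_mul_pow_le_half hγ0.le hγ1.le n
  refine ⟨mul_le_mul_of_nonneg_left ?_ hε.le, mul_le_mul_of_nonneg_left ?_ hε.le,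
    mul_nonneg hε.le (by linarith)⟩
  · rw [hlast, mul_assoc]; nlinarith
  · rw [mul_assoc]; nlinarith
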